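/- arXiv:1308.0872 — 3 statements merged into one kernel-verified Lean document; each statement's English description precedes it below -/
import Mathlib

section
/- If L = (1+a_0)(1+a_1)···(1+a_{K-1}) satisfies ess sup_ω |L| < 1, the sequences σ_n → 0, the a_n are bounded K-periodic random variables, and ‖ξ_k‖_{L^p(Ω)} ≤ 1 for all k, then the solution X_n of X_{n+1} = X_n + a_n X_n + σ_n ξ_{n+1} with deterministic initial value X_0 satisfies ‖X_n‖_{L^p(Ω)} → 0 as n → ∞. -/
/-!
Over one period the recursion multiplies `X` by `∏_{j<K} (1 + a_{mK+j})`, which is a.s. equal to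
`L`. The variation-of-constants formula together with Hölder's inequality for the exponents `∞`
and `p` therefore gives `‖X_{(m+1)K}‖_p ≤ ‖L‖_∞ ‖X_{mK}‖_p + c_m` with `c_m → 0`, and a contraction
perturbed by a vanishing sequence tends to `0`. Between multiples of `K` the norm grows at most by
the bounded factors `‖1 + a_n‖_∞`, so the whole sequence follows the subsequence `‖X_{mK}‖_p`.
-/

open MeasureTheory ProbabilityTheory Filter Topology Finset
open scoped ENNReal

theorem Nat.tendsto_mul_add_atTop {K : ℕ} (hK : 0 < K) (r : ℕ) :
    Tendsto (fun m => m * K + r) atTop atTop :=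
  tendsto_atTop_mono (fun m => (Nat.le_mul_of_pos_right m hK).trans (Nat.le_add_right _ r))
    tendsto_id

namespace ENNReal

theorem tendsto_zero_of_le_mul_add {T s : ℕ → ℝ≥0∞} {ρ : ℝ≥0∞} (hρ : ρ < 1)
    (hT : ∀ n, T n ≠ ∞) (hs : Tendsto s atTop (𝓝 0)) (hrec : ∀ n, T (n + 1) ≤ ρ * T n + s n) :
    Tendsto T atTop (𝓝 0) := by
  rw [ENNReal.tendsto_nhds_zero]
  intro ε hε
  have hε2 : 0 < ε / 2 := ENNReal.half_pos hε.ne'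
  obtain ⟨N, hN⟩ := eventually_atTop.1 <| ENNReal.tendsto_nhds_zero.1 hs ((1 - ρ) * (ε / 2))
    (ENNReal.mul_pos (tsub_pos_of_lt hρ).ne' hε2.ne')
  -- `ε / 2` is a fixed point of `t ↦ ρ * t + (1 - ρ) * (ε / 2)`
  have hdecay : ∀ m, T (N + m) ≤ ρ ^ m * T N + ε / 2 := by
    intro m
    induction m with
    | zero => simp
    | succ m ih =>
      calc T (N + (m + 1)) ≤ ρ * (ρ ^ m * T N + ε / 2) + (1 - ρ) * (ε / 2) :=
            (hrec (N + m)).trans (add_le_add (by gcongr) (hN _ (Nat.le_add_right N m)))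
        _ = ρ ^ (m + 1) * T N + (ρ + (1 - ρ)) * (ε / 2) := by ring
        _ = ρ ^ (m + 1) * T N + ε / 2 := by rw [add_tsub_cancel_of_le hρ.le, one_mul]
  have hpow : Tendsto (fun m => ρ ^ m * T N) atTop (𝓝 0) := by
    simpa using ENNReal.Tendsto.mul_const (ENNReal.tendsto_pow_atTop_nhds_zero_of_lt_one hρ)
      (Or.inr (hT N))
  obtain ⟨N', hN'⟩ := eventually_atTop.1 (ENNReal.tendsto_nhds_zero.1 hpow _ hε2)
  refine eventually_atTop.2 ⟨N + N', fun n hn => ?_⟩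
  obtain ⟨m, rfl⟩ := Nat.exists_eq_add_of_le (le_of_add_le_left hn)
  calc T (N + m) ≤ ρ ^ m * T N + ε / 2 := hdecay m
    _ ≤ ε / 2 + ε / 2 := by gcongr; exact hN' m (by omega)
    _ = ε := ENNReal.add_halves ε

theorem tendsto_zero_of_tendsto_comp_mul_of_le_mul_add {Y s : ℕ → ℝ≥0∞} {M : ℝ≥0∞}
    (hM : M ≠ ∞) (hs : Tendsto s atTop (𝓝 0)) (hrec : ∀ n, Y (n + 1) ≤ M * Y n + s n)
    {K : ℕ} (hK : 0 < K) (hY : Tendsto (fun m => Y (m * K)) atTop (𝓝 0)) :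
    Tendsto Y atTop (𝓝 0) := by
  have hshift : ∀ r, Tendsto (fun m => Y (m * K + r)) atTop (𝓝 0) := by
    intro r
    induction r with
    | zero => simpa using hY
    | succ r ih =>
      have hbound := (ENNReal.Tendsto.const_mul ih (Or.inr hM)).add
        (hs.comp (Nat.tendsto_mul_add_atTop hK r))
      rw [mul_zero, add_zero] at hbound
      exact tendsto_of_tendsto_of_tendsto_of_le_of_le tendsto_const_nhds hbound
        (fun _ => zero_le) fun m => hrec _
  have hsum : Tendsto (fun n => ∑ r ∈ range K, Y (n / K * K + r)) atTop (𝓝 0) := by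
    have := (tendsto_finsetSum (range K) fun r _ => hshift r).comp
      (Nat.tendsto_div_const_atTop hK.ne')
    rwa [sum_const_zero] at this
  refine tendsto_of_tendsto_of_tendsto_of_le_of_le tendsto_const_nhds hsum
    (fun _ => zero_le) fun n => ?_
  calc Y n = Y (n / K * K + n % K) := by rw [Nat.div_add_mod']
    _ ≤ ∑ r ∈ range K, Y (n / K * K + r) :=
      single_le_sum (f := fun r => Y (n / K * K + r)) (fun _ _ => zero_le)
        (mem_range.2 (Nat.mod_lt n hK))

theorem tendsto_zero_of_block_contraction {Y s : ℕ → ℝ≥0∞} {M ρ : ℝ≥0∞} {K : ℕ}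
    (hK : 0 < K) (hM : M ≠ ∞) (hρ : ρ < 1) (hY0 : Y 0 ≠ ∞) (hs_ne : ∀ n, s n ≠ ∞)
    (hs : Tendsto s atTop (𝓝 0)) (hstep : ∀ n, Y (n + 1) ≤ M * Y n + M * s n)
    (hblock : ∀ m, Y ((m + 1) * K) ≤ ρ * Y (m * K) + M ^ K * ∑ j ∈ range K, s (m * K + j)) :
    Tendsto Y atTop (𝓝 0) := by
  have hY : ∀ n, Y n ≠ ∞ := by
    intro n
    induction n with
    | zero => exact hY0
    | succ n ih =>
      exact ne_top_of_le_ne_top (add_ne_top.2 ⟨mul_ne_top hM ih, mul_ne_top hM (hs_ne n)⟩) (hstep n)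
  have hMs : Tendsto (fun n => M * s n) atTop (𝓝 0) := by
    simpa using ENNReal.Tendsto.const_mul hs (Or.inr hM)
  have hc : Tendsto (fun m => M ^ K * ∑ j ∈ range K, s (m * K + j)) atTop (𝓝 0) := by
    have hsum := tendsto_finsetSum (range K) fun j _ => hs.comp (Nat.tendsto_mul_add_atTop hK j)
    rw [sum_const_zero] at hsum
    simpa using ENNReal.Tendsto.const_mul hsum (Or.inr (by finiteness))
  exact tendsto_zero_of_tendsto_comp_mul_of_le_mul_add hM hMs hstep hK
    (tendsto_zero_of_le_mul_add hρ (fun m => hY _) hc hblock)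

end ENNReal

theorem linear_recurrence_add_eq {R : Type*} [CommSemiring R] {b f x : ℕ → R}
    (hx : ∀ n, x (n + 1) = b n * x n + f n) (n s : ℕ) :
    x (n + s) = (∏ j ∈ range s, b (n + j)) * x n +
      ∑ j ∈ range s, (∏ i ∈ Ico (j + 1) s, b (n + i)) * f (n + j) := by
  induction s with
  | zero => simp
  | succ s ih =>
    have hsucc : ∀ j ∈ range s, b (n + s) * ((∏ i ∈ Ico (j + 1) s, b (n + i)) * f (n + j)) =
        (∏ i ∈ Ico (j + 1) (s + 1), b (n + i)) * f (n + j) := fun j hj => by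
      rw [prod_Ico_succ_top (mem_range.1 hj)]; ring
    rw [← add_assoc, hx, ih, prod_range_succ, sum_range_succ, Ico_self, prod_empty, one_mul,
      mul_add, mul_sum, sum_congr rfl hsucc]
    ring

section

variable {Ω 𝕜 : Type*} [MeasurableSpace Ω] {μ : Measure Ω} [NormedCommRing 𝕜] [NormOneClass 𝕜]

theorem eLpNorm_top_prod_le {ι : Type*} (s : Finset ι) (g : ι → Ω → 𝕜) :
    eLpNorm (∏ i ∈ s, g i) ∞ μ ≤ ∏ i ∈ s, eLpNorm (g i) ∞ μ := by
  simp only [eLpNorm_exponent_top]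
  refine eLpNormEssSup_le_of_ae_enorm_bound ?_
  have hg : ∀ᵐ ω ∂μ, ∀ i ∈ s, ‖g i ω‖ₑ ≤ eLpNormEssSup (g i) μ :=
    (eventually_all_finset s).2 fun i _ => enorm_ae_le_eLpNormEssSup (g i) μ
  filter_upwards [hg] with ω hω
  rw [prod_apply]
  calc ‖∏ i ∈ s, g i ω‖ₑ ≤ ∏ i ∈ s, ‖g i ω‖ₑ := by
        simpa only [enorm_eq_nnnorm, ← ENNReal.ofNNReal_finsetProd, ENNReal.coe_le_coe]
          using s.nnnorm_prod_le _
    _ ≤ ∏ i ∈ s, eLpNormEssSup (g i) μ := prod_le_prod' hω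

theorem eLpNorm_linear_recurrence_add_le {p : ℝ≥0∞} (hp : 1 ≤ p) {b f x : ℕ → Ω → 𝕜}
    (hb : ∀ n, AEStronglyMeasurable (b n) μ) (hf : ∀ n, AEStronglyMeasurable (f n) μ)
    (hx0 : AEStronglyMeasurable (x 0) μ) (hx : ∀ n, x (n + 1) = b n * x n + f n)
    {M : ℝ≥0∞} (hM1 : 1 ≤ M) (hM : ∀ n, eLpNorm (b n) ∞ μ ≤ M) (n s : ℕ) :
    eLpNorm (x (n + s)) p μ ≤ eLpNorm (∏ j ∈ range s, b (n + j)) ∞ μ * eLpNorm (x n) p μ +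
      M ^ s * ∑ j ∈ range s, eLpNorm (f (n + j)) p μ := by
  have hx_meas : ∀ n, AEStronglyMeasurable (x n) μ := by
    intro n
    induction n with
    | zero => exact hx0
    | succ n ih => rw [hx]; exact ((hb n).mul ih).add (hf n)
  have hQ : ∀ j ∈ range s, eLpNorm (∏ i ∈ Ico (j + 1) s, b (n + i)) ∞ μ ≤ M ^ s := fun j _ =>
    calc _ ≤ ∏ i ∈ Ico (j + 1) s, eLpNorm (b (n + i)) ∞ μ := eLpNorm_top_prod_le _ _
      _ ≤ M ^ #(Ico (j + 1) s) := prod_le_pow_card _ _ _ fun i _ => hM _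
      _ ≤ M ^ s := pow_le_pow_right₀ hM1 (by simp)
  have hprod_meas : ∀ t : Finset ℕ, ∀ g : ℕ → ℕ, AEStronglyMeasurable (∏ i ∈ t, b (g i)) μ :=
    fun t g => t.aestronglyMeasurable_prod fun i _ => hb (g i)
  have hmul : ∀ φ g : Ω → 𝕜, AEStronglyMeasurable g μ →
      eLpNorm (φ * g) p μ ≤ eLpNorm φ ∞ μ * eLpNorm g p μ :=
    fun φ g hg => eLpNorm_smul_le_eLpNorm_top_mul_eLpNorm p hg φ
  rw [linear_recurrence_add_eq hx n s, mul_sum]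
  refine (eLpNorm_add_le ((hprod_meas _ _).mul (hx_meas n))
    (Finset.aestronglyMeasurable_sum _ fun j _ => (hprod_meas _ _).mul (hf _)) hp).trans
    (add_le_add (hmul _ _ (hx_meas n)) ?_)
  refine (eLpNorm_sum_le (fun j _ => (hprod_meas _ _).mul (hf _)) hp).trans
    (sum_le_sum fun j hj => (hmul _ _ (hf _)).trans ?_)
  gcongr
  exact hQ j hj

end

theorem eLpNorm_top_one_add_le {Ω : Type*} [MeasurableSpace Ω] {μ : Measure Ω} {g : Ω → ℝ}
    {C : ℝ} (hg : ∀ᵐ ω ∂μ, |g ω| ≤ C) : eLpNorm (fun ω => 1 + g ω) ∞ μ ≤ 1 + ENNReal.ofReal C := by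
  rw [eLpNorm_exponent_top]
  refine (eLpNormEssSup_le_of_ae_bound (C := 1 + C) ?_).trans ?_
  · filter_upwards [hg] with ω hω
    exact (norm_add_le _ _).trans (by simpa using hω)
  · simpa using ENNReal.ofReal_add_le (p := 1) (q := C)

theorem ae_eq_prod_range_mul_add_of_periodic {Ω β : Type*} [MeasurableSpace Ω]
    {μ : Measure Ω} [CommMonoid β] {g : ℕ → Ω → β} {K : ℕ} (hg : ∀ n, g (n + K) =ᵐ[μ] g n)
    (m : ℕ) : ∏ j ∈ range K, g (m * K + j) =ᵐ[μ] ∏ j ∈ range K, g j := by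
  have hper : ∀ᵐ ω ∂μ, Function.Periodic (g · ω) K := ae_all_iff.2 hg
  filter_upwards [hper] with ω hω
  simp only [prod_apply]
  exact prod_congr rfl fun j _ => by simpa [add_comm] using hω.nat_mul m j

/-- If ess sup |L| < 1 (with L = ∏_{i<K}(1+a_i)), σ_n → 0, the a_n are
bounded K-periodic random variables, and ‖ξ_k‖_{L^p} ≤ 1, then ‖X_n‖_{L^p} → 0. -/
theorem stmt0 {Ω : Type*} [MeasureSpace Ω] [IsProbabilityMeasure (ℙ : Measure Ω)]
    (p : ℝ≥0∞) (hp : 1 ≤ p) (K : ℕ) (hK : 0 < K)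
    (a ξ X : ℕ → Ω → ℝ) (σ : ℕ → ℝ) (x0 : ℝ)
    (ha_meas : ∀ n, Measurable (a n)) (hξ_meas : ∀ n, Measurable (ξ n))
    (ha_bdd : ∃ C : ℝ, ∀ n, ∀ᵐ ω, |a n ω| ≤ C)
    (ha_per : ∀ n, ∀ᵐ ω, a (n + K) ω = a n ω)
    (hσ : Tendsto σ atTop (𝓝 0))
    (hξ : ∀ k, eLpNorm (ξ k) p ℙ ≤ 1)
    (hL : eLpNorm (fun ω => ∏ i ∈ Finset.range K, (1 + a i ω)) ⊤ ℙ < 1)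
    (hX0 : ∀ ω, X 0 ω = x0)
    (hX : ∀ n ω, X (n + 1) ω = (1 + a n ω) * X n ω + σ n * ξ (n + 1) ω) :
    Tendsto (fun n => eLpNorm (X n) p ℙ) atTop (𝓝 0) := by
  obtain ⟨C, hC⟩ := ha_bdd
  set b : ℕ → Ω → ℝ := fun n ω => 1 + a n ω
  set f : ℕ → Ω → ℝ := fun n ω => σ n * ξ (n + 1) ω
  have hbM : ∀ n, eLpNorm (b n) ∞ ℙ ≤ 1 + ENNReal.ofReal C := fun n =>
    eLpNorm_top_one_add_le (hC n)
  have hf : ∀ n, eLpNorm (f n) p ℙ ≤ ‖σ n‖ₑ := fun n =>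
    (eLpNorm_const_smul (σ n) (ξ (n + 1)) p ℙ).trans_le (mul_le_of_le_one_right' (hξ _))
  have hb_per : ∀ n, b (n + K) =ᵐ[ℙ] b n := fun n => by
    filter_upwards [ha_per n] with ω hω
    simp only [b, hω]
  have hstep := eLpNorm_linear_recurrence_add_le (b := b) (f := f) hp
    (fun n => (measurable_const.add (ha_meas n)).aestronglyMeasurable)
    (fun n => (measurable_const.mul (hξ_meas (n + 1))).aestronglyMeasurable)
    (by rw [funext hX0]; exact aestronglyMeasurable_const) (fun n => funext (hX n))
    le_self_add hbM
  refine ENNReal.tendsto_zero_of_block_contraction (M := 1 + ENNReal.ofReal C) hK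
    (by finiteness) hL (by rw [funext hX0]; exact (memLp_const x0).eLpNorm_ne_top)
    (fun n => ne_top_of_le_ne_top enorm_ne_top (hf n))
    (tendsto_of_tendsto_of_tendsto_of_le_of_le tendsto_const_nhds (by simpa using hσ.enorm)
      (fun _ => zero_le) hf) (fun n => ?_) (fun m => ?_)
  · refine (hstep n 1).trans ?_
    simpa using add_le_add_left (mul_le_mul_left (hbM n) _) _
  · rw [add_one_mul]
    refine (hstep (m * K) K).trans_eq ?_
    rw [eLpNorm_congr_ae (ae_eq_prod_range_mul_add_of_periodic hb_per m), prod_fn]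
end

section
/- If L = (1+a_0)···(1+a_{K-1}) = 1 almost surely, σ_n → 0, the a_n are bounded K-periodic random variables, and ‖ξ_k‖_{L^2(Ω)} ≤ 1 for all k, then ‖X_n − X_{n+K}‖_{L^2(Ω)} → 0 as n → ∞. -/
open MeasureTheory ProbabilityTheory Filter Topology Finset
open scoped ENNReal NNReal

/-!
Unrolling the recursion over one period gives
`X (n + K) = L_n X n + ∑_{j < K} (∏_{n+j < i < n+K} (1 + a i)) σ (n+j) ξ (n+j+1)`,
where `L_n`, the product of `1 + a i` over the window `[n, n + K)`, equals `L = 1` by periodicity.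
So `X n - X (n + K)` is a sum of `K` noise terms whose coefficients are bounded by
`(1 + C)^K |σ (n + j)|`, and Minkowski's inequality in `L²` bounds its norm by a sum that tends
to `0` with `σ`.
-/

theorem Function.Periodic.prod_Ico_add_eq_prod_range {M : Type*} [CommMonoid M] {f : ℕ → M}
    {K : ℕ} (hf : Function.Periodic f K) (n : ℕ) :
    ∏ i ∈ Ico n (n + K), f i = ∏ i ∈ range K, f i := by
  induction n with
  | zero => rw [zero_add, range_eq_Ico]
  | succ n ih =>
    rcases K.eq_zero_or_pos with rfl | hK
    · simp
    rw [← ih, show n + 1 + K = n + K + 1 by omega, prod_Ico_succ_top (by omega : n + 1 ≤ n + K),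
      prod_eq_prod_Ico_succ_bot (by omega : n < n + K), hf n, mul_comm]

theorem eq_prod_mul_add_sum_of_recurrence {R : Type*} [CommSemiring R] {x c b : ℕ → R}
    (h : ∀ n, x (n + 1) = c n * x n + b n) (n m : ℕ) :
    x (n + m) = (∏ i ∈ Ico n (n + m), c i) * x n +
      ∑ j ∈ range m, (∏ i ∈ Ico (n + j + 1) (n + m), c i) * b (n + j) := by
  induction m with
  | zero => simp
  | succ m ih =>
    have hshift : ∀ j ∈ range m, (∏ i ∈ Ico (n + j + 1) (n + m + 1), c i) * b (n + j) =
        c (n + m) * ((∏ i ∈ Ico (n + j + 1) (n + m), c i) * b (n + j)) := fun j hj => by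
      rw [prod_Ico_succ_top (by have := mem_range.1 hj; omega)]
      ring
    rw [← add_assoc, h, ih, sum_range_succ, sum_congr rfl hshift, ← mul_sum,
      prod_Ico_succ_top (by omega), Ico_self, prod_empty]
    ring

theorem sub_add_eq_neg_sum_of_recurrence {R : Type*} [CommRing R] {x c b : ℕ → R}
    (h : ∀ n, x (n + 1) = c n * x n + b n) {n K : ℕ} (hc : ∏ i ∈ Ico n (n + K), c i = 1) :
    x n - x (n + K) = -∑ j ∈ range K, (∏ i ∈ Ico (n + j + 1) (n + K), c i) * b (n + j) := by
  rw [eq_prod_mul_add_sum_of_recurrence h n K, hc]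
  ring

theorem abs_prod_one_add_le_pow {ι : Type*} {s : Finset ι} {a : ι → ℝ} {C : ℝ} {K : ℕ}
    (hC : 0 ≤ C) (ha : ∀ i ∈ s, |a i| ≤ C) (hs : #s ≤ K) :
    |∏ i ∈ s, (1 + a i)| ≤ (1 + C) ^ K := calc
  |∏ i ∈ s, (1 + a i)| = ∏ i ∈ s, |1 + a i| := abs_prod _ _
  _ ≤ ∏ _i ∈ s, (1 + C) := prod_le_prod (fun _ _ => abs_nonneg _) fun i hi =>
    (abs_add_le _ _).trans (by rw [abs_one]; linarith [ha i hi])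
  _ = (1 + C) ^ #s := prod_const _
  _ ≤ (1 + C) ^ K := pow_le_pow_right₀ (by linarith) hs

theorem eLpNorm_sum_le_sum_ofReal {α ι E G : Type*} [MeasurableSpace α] {μ : Measure α}
    [NormedAddCommGroup E] [NormedAddCommGroup G] {s : Finset ι} {F : ι → α → E}
    {g : ι → α → G} {c : ι → ℝ} {p : ℝ≥0∞} (hp : 1 ≤ p)
    (hF : ∀ i ∈ s, AEStronglyMeasurable (F i) μ) (hFg : ∀ i ∈ s, ∀ᵐ x ∂μ, ‖F i x‖ ≤ c i * ‖g i x‖)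
    (hg : ∀ i ∈ s, eLpNorm (g i) p μ ≤ 1) :
    eLpNorm (∑ i ∈ s, F i) p μ ≤ ∑ i ∈ s, ENNReal.ofReal (c i) :=
  (eLpNorm_sum_le hF hp).trans <| sum_le_sum fun i hi => calc
    eLpNorm (F i) p μ ≤ ENNReal.ofReal (c i) * eLpNorm (g i) p μ :=
      eLpNorm_le_mul_eLpNorm_of_ae_le_mul (hFg i hi) p
    _ ≤ ENNReal.ofReal (c i) := mul_le_of_le_one_right' (hg i hi)

theorem tendsto_sum_range_ofReal_mul_abs_add {u : ℕ → ℝ} (hu : Tendsto u atTop (𝓝 0))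
    (M : ℝ) (K : ℕ) :
    Tendsto (fun n => ∑ j ∈ range K, ENNReal.ofReal (M * |u (n + j)|)) atTop (𝓝 0) := by
  have hterm (j : ℕ) : Tendsto (fun n => ENNReal.ofReal (M * |u (n + j)|)) atTop (𝓝 0) := by
    simpa using ENNReal.tendsto_ofReal ((hu.comp (tendsto_add_atTop_nat j)).abs.const_mul M)
  simpa using tendsto_finsetSum (range K) fun j _ => hterm j

theorem stmt1_general {Ω : Type*} [MeasureSpace Ω] [IsProbabilityMeasure (ℙ : Measure Ω)]
    (K : ℕ)
    (a ξ X : ℕ → Ω → ℝ) (σ : ℕ → ℝ)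
    (ha_meas : ∀ n, Measurable (a n)) (hξ_meas : ∀ n, Measurable (ξ n))
    (ha_bdd : ∃ C : ℝ, ∀ n, ∀ᵐ ω, |a n ω| ≤ C)
    (ha_per : ∀ n, ∀ᵐ ω, a (n + K) ω = a n ω)
    (hσ : Tendsto σ atTop (𝓝 0))
    (hξ : ∀ k, eLpNorm (ξ k) 2 ℙ ≤ 1)
    (hL : ∀ᵐ ω, ∏ i ∈ Finset.range K, (1 + a i ω) = 1)
    (hX : ∀ n ω, X (n + 1) ω = (1 + a n ω) * X n ω + σ n * ξ (n + 1) ω) :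
    Tendsto (fun n => eLpNorm (fun ω => X n ω - X (n + K) ω) 2 ℙ) atTop (𝓝 0) := by
  obtain ⟨C, hC⟩ := ha_bdd
  have hC0 : 0 ≤ C := by
    obtain ⟨ω, hω⟩ := (hC 0).exists
    exact (abs_nonneg _).trans hω
  have hgood : ∀ᵐ ω, (∀ n, |a n ω| ≤ C) ∧ ∀ n, ∏ i ∈ Ico n (n + K), (1 + a i ω) = 1 := by
    filter_upwards [ae_all_iff.2 hC, ae_all_iff.2 ha_per, hL] with ω hCω hper hLω
    refine ⟨hCω, fun n => ?_⟩
    rw [Function.Periodic.prod_Ico_add_eq_prod_range (f := fun i => 1 + a i ω)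
      (fun i => by simp [hper i]), hLω]
  refine tendsto_of_tendsto_of_tendsto_of_le_of_le tendsto_const_nhds
    (tendsto_sum_range_ofReal_mul_abs_add hσ ((1 + C) ^ K) K) (fun _ => zero_le) fun n => ?_
  set F : ℕ → Ω → ℝ := fun j ω =>
    (∏ i ∈ Ico (n + j + 1) (n + K), (1 + a i ω)) * (σ (n + j) * ξ (n + j + 1) ω)
  have hdiff : (fun ω => X n ω - X (n + K) ω) =ᵐ[ℙ] -∑ j ∈ range K, F j := by
    filter_upwards [hgood] with ω hω
    simpa [F] using sub_add_eq_neg_sum_of_recurrence (x := fun m => X m ω) (fun m => hX m ω) (hω.2 n)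
  rw [eLpNorm_congr_ae hdiff, eLpNorm_neg]
  refine eLpNorm_sum_le_sum_ofReal (g := fun j => ξ (n + j + 1)) (by norm_num)
    (fun j _ => by fun_prop) (fun j hj => ?_) fun j _ => hξ (n + j + 1)
  filter_upwards [hgood] with ω hω
  simp only [F, Real.norm_eq_abs, abs_mul, ← mul_assoc]
  gcongr
  exact abs_prod_one_add_le_pow hC0 (fun i _ => hω.1 i) (by rw [Nat.card_Ico]; omega)

/-- If L = 1 a.s., σ_n → 0, a_n bounded K-periodic, ‖ξ_k‖_{L²} ≤ 1, then
‖X_n − X_{n+K}‖_{L²} → 0. -/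
theorem stmt1 {Ω : Type*} [MeasureSpace Ω] [IsProbabilityMeasure (ℙ : Measure Ω)]
    (K : ℕ) (hK : 0 < K)
    (a ξ X : ℕ → Ω → ℝ) (σ : ℕ → ℝ) (x0 : ℝ)
    (ha_meas : ∀ n, Measurable (a n)) (hξ_meas : ∀ n, Measurable (ξ n))
    (ha_bdd : ∃ C : ℝ, ∀ n, ∀ᵐ ω, |a n ω| ≤ C)
    (ha_per : ∀ n, ∀ᵐ ω, a (n + K) ω = a n ω)
    (hσ : Tendsto σ atTop (𝓝 0))
    (hξ : ∀ k, eLpNorm (ξ k) 2 ℙ ≤ 1)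
    (hL : ∀ᵐ ω, ∏ i ∈ Finset.range K, (1 + a i ω) = 1)
    (hX0 : ∀ ω, X 0 ω = x0)
    (hX : ∀ n ω, X (n + 1) ω = (1 + a n ω) * X n ω + σ n * ξ (n + 1) ω) :
    Tendsto (fun n => eLpNorm (fun ω => X n ω - X (n + K) ω) 2 ℙ) atTop (𝓝 0) :=
  stmt1_general K a ξ X σ ha_meas hξ_meas ha_bdd ha_per hσ hξ hL hX
end

section
/- If L = (1+a_0)···(1+a_{K-1}) = 1 almost surely, σ_n → 0, the a_n are bounded K-periodic random variables, and σ_n ξ_{n+1} → 0 almost surely as n → ∞, then X_n − X_{n+K} → 0 almost surely as n → ∞. -/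
open MeasureTheory ProbabilityTheory Filter Topology Finset
open scoped ENNReal NNReal

/-- Deterministic core lemma. -/
theorem stmt2_det (K : ℕ) (hK : 0 < K) (b s x : ℕ → ℝ) (C : ℝ)
    (hC : ∀ n, |b n| ≤ C)
    (hper : ∀ n, b (n + K) = b n)
    (hL : ∏ i ∈ Finset.range K, (1 + b i) = 1)
    (hs : Tendsto s atTop (𝓝 0))
    (hx : ∀ n, x (n + 1) = (1 + b n) * x n + s n) :
    Tendsto (fun n => x n - x (n + K)) atTop (𝓝 0) := by
  have hC0 : 0 ≤ C := le_trans (abs_nonneg _) (hC 0)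
  -- b m = b (m % K)
  have hmod : ∀ m, b m = b (m % K) := by
    intro m
    induction m using Nat.strong_induction_on with
    | _ m ih =>
      rcases lt_or_ge m K with h | h
      · rw [Nat.mod_eq_of_lt h]
      · obtain ⟨m', rfl⟩ := Nat.exists_eq_add_of_le h
        rw [Nat.add_comm K m', hper m', ih m' (by omega), Nat.add_mod_right]
  -- all factors nonzero
  have hne : ∀ m, (1 : ℝ) + b m ≠ 0 := by
    intro m
    rw [hmod m]
    have hmK : m % K ∈ Finset.range K := Finset.mem_range.mpr (Nat.mod_lt _ hK)
    intro h0
    have h1 : ∏ i ∈ Finset.range K, (1 + b i) = 0 := Finset.prod_eq_zero hmK h0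
    rw [hL] at h1
    norm_num at h1
  -- product over any window of length K is 1
  have hprod : ∀ n, ∏ i ∈ Finset.range K, (1 + b (n + i)) = 1 := by
    intro n
    induction n with
    | zero => simpa using hL
    | succ n ih =>
      have key : (1 + b n) * ∏ i ∈ Finset.range K, (1 + b (n + 1 + i))
          = (1 + b n) * 1 := by
        have h1 : ∏ i ∈ Finset.range (K + 1), (1 + b (n + i))
            = (∏ i ∈ Finset.range K, (1 + b (n + (i + 1)))) * (1 + b (n + 0)) :=
          Finset.prod_range_succ' (fun i => 1 + b (n + i)) K
        have h2 : ∏ i ∈ Finset.range (K + 1), (1 + b (n + i))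
            = (∏ i ∈ Finset.range K, (1 + b (n + i))) * (1 + b (n + K)) :=
          Finset.prod_range_succ (fun i => 1 + b (n + i)) K
        rw [hper n] at h2
        calc (1 + b n) * ∏ i ∈ Finset.range K, (1 + b (n + 1 + i))
            = (∏ i ∈ Finset.range K, (1 + b (n + (i + 1)))) * (1 + b (n + 0)) := by
              simp only [Nat.add_zero]
              rw [mul_comm]
              congr 1
              exact Finset.prod_congr rfl (fun i _ => by ring_nf)
          _ = (∏ i ∈ Finset.range K, (1 + b (n + i))) * (1 + b n) := by rw [← h1, h2]
          _ = (1 + b n) * ∏ i ∈ Finset.range K, (1 + b (n + i)) := mul_comm _ _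
          _ = (1 + b n) * 1 := by rw [ih]
      exact mul_left_cancel₀ (hne n) key
  -- explicit formula
  have hform : ∀ n m, x (n + m)
      = (∏ i ∈ Finset.range m, (1 + b (n + i))) * x n
        + ∑ j ∈ Finset.range m, (∏ i ∈ Finset.Ico (j + 1) m, (1 + b (n + i))) * s (n + j) := by
    intro n m
    induction m with
    | zero => simp
    | succ m ih =>
      rw [← Nat.add_assoc, hx (n + m), ih, Finset.prod_range_succ, Finset.sum_range_succ]
      have hIco : ∀ j ∈ Finset.range m,
          (∏ i ∈ Finset.Ico (j + 1) (m + 1), (1 + b (n + i))) * s (n + j)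
          = ((∏ i ∈ Finset.Ico (j + 1) m, (1 + b (n + i))) * (1 + b (n + m))) * s (n + j) := by
        intro j hj
        have hjm := Finset.mem_range.mp hj
        rw [Finset.prod_Ico_succ_top (by omega : j + 1 ≤ m)]
      rw [Finset.sum_congr rfl hIco, Finset.Ico_self, Finset.prod_empty]
      have hswap : ∀ j ∈ Finset.range m,
          (1 + b (n + m)) * ((∏ i ∈ Finset.Ico (j + 1) m, (1 + b (n + i))) * s (n + j))
          = ((∏ i ∈ Finset.Ico (j + 1) m, (1 + b (n + i))) * (1 + b (n + m))) * s (n + j) :=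
        fun j _ => by ring
      rw [mul_add, Finset.mul_sum, Finset.sum_congr rfl hswap]
      ring
  -- so x n - x (n+K) = - sum of K vanishing terms
  have hdiff : ∀ n, x n - x (n + K)
      = -∑ j ∈ Finset.range K, (∏ i ∈ Finset.Ico (j + 1) K, (1 + b (n + i))) * s (n + j) := by
    intro n
    rw [hform n K, hprod n]
    ring
  have hsum : Tendsto (fun n => ∑ j ∈ Finset.range K,
      (∏ i ∈ Finset.Ico (j + 1) K, (1 + b (n + i))) * s (n + j)) atTop (𝓝 0) := by
    have : (0 : ℝ) = ∑ j ∈ Finset.range K, (0 : ℝ) := by simp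
    rw [this]
    refine tendsto_finset_sum _ (fun j hj => ?_)
    have hsj : Tendsto (fun n => |s (n + j)|) atTop (𝓝 0) := by
      have := (hs.comp (tendsto_add_atTop_nat j)).abs
      simpa using this
    refine squeeze_zero_norm (fun n => ?_) (by simpa using hsj.const_mul ((1 + C) ^ K))
    have hb : |∏ i ∈ Finset.Ico (j + 1) K, (1 + b (n + i))| ≤ (1 + C) ^ K := by
      rw [Finset.abs_prod]
      calc ∏ i ∈ Finset.Ico (j + 1) K, |1 + b (n + i)|
          ≤ ∏ i ∈ Finset.Ico (j + 1) K, (1 + C) := by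
            refine Finset.prod_le_prod (fun i _ => abs_nonneg _) (fun i _ => ?_)
            calc |1 + b (n + i)| ≤ |(1:ℝ)| + |b (n + i)| := abs_add_le _ _
              _ ≤ 1 + C := by simp [hC (n + i)]
        _ = (1 + C) ^ (Finset.Ico (j + 1) K).card := Finset.prod_const _
        _ ≤ (1 + C) ^ K := by
            apply pow_le_pow_right₀ (by linarith)
            simp [Nat.card_Ico]
    calc ‖(∏ i ∈ Finset.Ico (j + 1) K, (1 + b (n + i))) * s (n + j)‖
        = |∏ i ∈ Finset.Ico (j + 1) K, (1 + b (n + i))| * |s (n + j)| := abs_mul _ _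
      _ ≤ (1 + C) ^ K * |s (n + j)| :=
          mul_le_mul_of_nonneg_right hb (abs_nonneg _)
  have := hsum.neg
  rw [neg_zero] at this
  refine this.congr (fun n => (hdiff n).symm)

/-- If L = 1 a.s., a_n bounded K-periodic, and σ_n ξ_{n+1} → 0 a.s.,
then X_n − X_{n+K} → 0 a.s. -/
theorem stmt2 {Ω : Type*} [MeasureSpace Ω] [IsProbabilityMeasure (ℙ : Measure Ω)]
    (K : ℕ) (hK : 0 < K)
    (a ξ X : ℕ → Ω → ℝ) (σ : ℕ → ℝ) (x0 : ℝ)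
    (ha_meas : ∀ n, Measurable (a n)) (hξ_meas : ∀ n, Measurable (ξ n))
    (ha_bdd : ∃ C : ℝ, ∀ n, ∀ᵐ ω, |a n ω| ≤ C)
    (ha_per : ∀ n, ∀ᵐ ω, a (n + K) ω = a n ω)
    (hL : ∀ᵐ ω, ∏ i ∈ Finset.range K, (1 + a i ω) = 1)
    (hnoise : ∀ᵐ ω, Tendsto (fun n => σ n * ξ (n + 1) ω) atTop (𝓝 0))
    (hX0 : ∀ ω, X 0 ω = x0)
    (hX : ∀ n ω, X (n + 1) ω = (1 + a n ω) * X n ω + σ n * ξ (n + 1) ω) :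
    ∀ᵐ ω, Tendsto (fun n => X n ω - X (n + K) ω) atTop (𝓝 0) := by
  obtain ⟨C, hCb⟩ := ha_bdd
  have hCae : ∀ᵐ ω, ∀ n, |a n ω| ≤ C := MeasureTheory.ae_all_iff.mpr hCb
  have hpae : ∀ᵐ ω, ∀ n, a (n + K) ω = a n ω := MeasureTheory.ae_all_iff.mpr ha_per
  filter_upwards [hCae, hpae, hL, hnoise] with ω h1 h2 h3 h4
  exact stmt2_det K hK (fun n => a n ω) (fun n => σ n * ξ (n + 1) ω) (fun n => X n ω)
    C h1 h2 h3 h4 (fun n => hX n ω)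
end
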